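/- arXiv:1807.08446 — 8 statements merged into one kernel-verified Lean document; each statement's English description precedes it below -/
import Mathlib

section
/- Let a ≥ 0 be a constant and define h(x) = a + 2·sin²(x/2) for x ∈ [0, π/2]. Then for every c ≥ 1 and every x ∈ [0, π/2] with c·x ∈ [0, π/2], it holds that h(c·x) ≤ c²·h(x). -/
open Real

lemma sin_smul_le (c t : ℝ) (hc : 1 ≤ c) (ht : 0 ≤ t) (hct : c * t ≤ π) :
    Real.sin (c * t) ≤ c * Real.sin t := by
  have hc0 : 0 < c := lt_of_lt_of_le one_pos hc
  have hconc := strictConcaveOn_sin_Icc.concaveOn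
  have hmem : c * t ∈ Set.Icc 0 π := ⟨mul_nonneg hc0.le ht, hct⟩
  have h0 : (0 : ℝ) ∈ Set.Icc 0 π := ⟨le_refl 0, Real.pi_pos.le⟩
  have hl : (0:ℝ) ≤ 1 / c := by positivity
  have hm : (0:ℝ) ≤ 1 - 1 / c := by
    have : 1 / c ≤ 1 := by rw [div_le_one hc0]; exact hc
    linarith
  have hsum : 1 / c + (1 - 1 / c) = 1 := by ring
  have := hconc.2 hmem h0 hl hm hsum
  simp only [smul_eq_mul, mul_zero, add_zero, Real.sin_zero] at this
  have ht' : (1 / c) * (c * t) = t := by field_simp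
  rw [ht'] at this
  calc Real.sin (c * t) = c * ((1/c) * Real.sin (c * t)) := by field_simp
    _ ≤ c * Real.sin t := by
        apply mul_le_mul_of_nonneg_left this hc0.le

/-- For `a ≥ 0` and `h x = a + 2 sin² (x/2)` on `[0, π/2]`,
`h (c*x) ≤ c² * h x` for every `c ≥ 1` with `x, c*x ∈ [0, π/2]`. -/
theorem stmt3 (a : ℝ) (ha : 0 ≤ a) (h : ℝ → ℝ)
    (hdef : ∀ x, h x = a + 2 * Real.sin (x / 2) ^ 2)
    (c x : ℝ) (hc : 1 ≤ c)
    (hx : x ∈ Set.Icc 0 (π / 2)) (hcx : c * x ∈ Set.Icc 0 (π / 2)) :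
    h (c * x) ≤ c ^ 2 * h x := by
  rw [hdef, hdef]
  have ht : 0 ≤ x / 2 := by linarith [hx.1]
  have hct : c * (x / 2) ≤ π := by
    have := hcx.2
    nlinarith [Real.pi_pos]
  have hsin := sin_smul_le c (x / 2) hc ht hct
  have hsin0 : 0 ≤ Real.sin (c * (x / 2)) := by
    apply Real.sin_nonneg_of_nonneg_of_le_pi
    · positivity
    · exact hct
  have hsq : Real.sin (c * (x / 2)) ^ 2 ≤ (c * Real.sin (x / 2)) ^ 2 :=
    pow_le_pow_left₀ hsin0 hsin 2
  have hcx2 : c * x / 2 = c * (x / 2) := by ring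
  rw [hcx2]
  nlinarith [hsq, mul_nonneg (by nlinarith : (0:ℝ) ≤ c^2 - 1) ha]
end

section
/- Let g₁, …, gₙ : ℝ → [0,∞) be piecewise r-log-Lipschitz functions and let M(gᵢ) denote the set of minima of gᵢ in its pieces. Then for every x ∈ ℝ there exists x' ∈ ∪_{i∈[n]} M(gᵢ) such that gᵢ(x') ≤ 2^r · gᵢ(x) for every i ∈ [n]. -/
/-!
Let `x'` be the point of `⋃ᵢ M(gᵢ)` nearest to `x`, at distance `D > 0`, and fix one `g`. Every
minimum of a piece of `g` lies at distance `≥ D` from `x`, so on the segment from `x` to `x'`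
each piece has the form `t ↦ h (A ± |t - x|)` with `A ≥ D ≥ |t - x|`. Moving away from the
minimum, the `r`-log-Lipschitz bound with ratio `(A + t) / (A + s) ≤ (D + t) / (D + s)` for
distances `s ≤ t`, and moving towards it, monotonicity of `h`, show that
`g t / (D + |t - x|) ^ r` is non-increasing along the segment on each piece. Continuity of `g`
glues the finitely many pieces, whence `g x' / (2D) ^ r ≤ g x / D ^ r`.
-/

/-- Data witnessing that `g : ℝ → [0,∞)` is piecewise `r`-log-Lipschitz:
a partition of `ℝ` into `m` pieces `X j`, each with a unique infimum point
`x₀ j` of `g`, and a non-decreasing `r`-log-Lipschitz function `h j` with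
`g x = h j |x - x₀ j|` on `X j`. -/
structure PiecewiseLogLipschitzData (r : ℝ) (g : ℝ → ℝ) where
  m : ℕ
  X : Fin m → Set ℝ
  x₀ : Fin m → ℝ
  h : Fin m → ℝ → ℝ
  cover : (⋃ j, X j) = Set.univ
  disj : ∀ j j' : Fin m, j ≠ j' → Disjoint (X j) (X j')
  mem_piece : ∀ j, x₀ j ∈ X j
  isMin : ∀ j, ∀ x ∈ X j, g (x₀ j) ≤ g x
  uniqueMin : ∀ j, ∀ x ∈ X j, g x = g (x₀ j) → x = x₀ j
  h_nonneg : ∀ j s, 0 ≤ h j s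
  h_mono : ∀ j, MonotoneOn (h j) (Set.Ici 0)
  h_loglip : ∀ j, ∀ c : ℝ, 1 ≤ c → ∀ s : ℝ, 0 ≤ s → h j (c * s) ≤ c ^ r * h j s
  eq_on_piece : ∀ j, ∀ x ∈ X j, g x = h j |x - x₀ j|

/-- The set `M(g)` of minima of the pieces. -/
def PiecewiseLogLipschitzData.minima {r : ℝ} {g : ℝ → ℝ}
    (d : PiecewiseLogLipschitzData r g) : Set ℝ := Set.range d.x₀

open Set Filter Topology

theorem ContinuousOn.apply_le_of_antitoneOn_cover {ι : Type*} {F : ℝ → ℝ} {A : ι → Set ℝ}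
    (S : Finset ι) {a b : ℝ} (hab : a ≤ b) (hF : ContinuousOn F (Icc a b))
    (hcov : Icc a b ⊆ ⋃ k ∈ S, A k) (hanti : ∀ k ∈ S, AntitoneOn F (A k ∩ Icc a b)) :
    F b ≤ F a := by
  classical
  revert a
  induction S using Finset.strongInduction with
  | H S ih =>
  intro a hab hF hcov hanti
  obtain ⟨k, hkS, hak⟩ : ∃ k ∈ S, a ∈ A k := by simpa using hcov ⟨le_rfl, hab⟩
  set T := A k ∩ Icc a b
  have hTne : T.Nonempty := ⟨a, hak, le_rfl, hab⟩
  have hTbdd : BddAbove T := ⟨b, fun t ht => ht.2.2⟩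
  set c := sSup T
  have hac : a ≤ c := le_csSup hTbdd ⟨hak, le_rfl, hab⟩
  have hcb : c ≤ b := csSup_le hTne fun t ht => ht.2.2
  -- `F ≤ F a` on `T`, hence on its closure, which contains `c`.
  have hFc : F c ≤ F a := by
    have hclosed : IsClosed (Icc a b ∩ F ⁻¹' Iic (F a)) :=
      hF.preimage_isClosed_of_isClosed isClosed_Icc isClosed_Iic
    have hsub : T ⊆ Icc a b ∩ F ⁻¹' Iic (F a) := fun t ht =>
      ⟨ht.2, hanti k hkS ⟨hak, le_rfl, hab⟩ ht ht.2.1⟩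
    exact (closure_minimal hsub hclosed ((isLUB_csSup hTne hTbdd).mem_closure hTne)).2
  rcases hcb.eq_or_lt with hcb | hcb
  · exact hcb ▸ hFc
  -- Past `c` the piece `A k` is no longer needed.
  have hright : ∀ t ∈ Ioc c b, F b ≤ F t := by
    rintro t ⟨hct, htb⟩
    refine ih (S.erase k) (Finset.erase_ssubset hkS) htb
      (hF.mono (Icc_subset_Icc (hac.trans hct.le) le_rfl)) ?_ ?_
    · intro s hs
      have hs' : s ∈ Icc a b := ⟨hac.trans (hct.le.trans hs.1), hs.2⟩
      obtain ⟨j, hjS, hsj⟩ : ∃ j ∈ S, s ∈ A j := by simpa using hcov hs'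
      have hjk : j ≠ k := by
        rintro rfl
        exact absurd (le_csSup hTbdd ⟨hsj, hs'⟩) (by linarith [hs.1])
      simpa using ⟨j, ⟨hjk, hjS⟩, hsj⟩
    · intro j hj
      exact (hanti j (Finset.mem_of_mem_erase hj)).mono
        (inter_subset_inter_right _ (Icc_subset_Icc (hac.trans hct.le) le_rfl))
  have hcont : Tendsto F (𝓝[Ioc c b] c) (𝓝 (F c)) :=
    (hF c ⟨hac, hcb.le⟩).mono (Icc_subset_Icc hac le_rfl |>.trans' Ioc_subset_Icc_self)
  have := left_nhdsWithin_Ioc_neBot hcb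
  exact (ge_of_tendsto hcont (eventually_nhdsWithin_of_forall hright)).trans hFc

theorem exists_sign_forall_abs_add_mul {a u : ℝ} (hu : |u| = 1) :
    ∃ ε : ℝ, (ε = 1 ∨ ε = -1) ∧ ∀ s, 0 ≤ s → s ≤ |a| → |a + s * u| = |a| + ε * s := by
  rcases (abs_eq zero_le_one).1 hu with rfl | rfl <;> rcases le_total 0 a with ha | ha
  · exact ⟨1, .inl rfl, fun s hs _ => by rw [abs_of_nonneg ha, abs_of_nonneg (by linarith)]; ring⟩
  · refine ⟨-1, .inr rfl, fun s hs hsa => ?_⟩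
    rw [abs_of_nonpos ha] at hsa ⊢
    rw [abs_of_nonpos (by linarith)]; ring
  · refine ⟨-1, .inr rfl, fun s hs hsa => ?_⟩
    rw [abs_of_nonneg ha] at hsa ⊢
    rw [abs_of_nonneg (by linarith)]; ring
  · exact ⟨1, .inl rfl, fun s hs _ => by rw [abs_of_nonpos ha, abs_of_nonpos (by linarith)]; ring⟩

theorem apply_add_sign_mul_div_rpow_le {r : ℝ} (hr : 0 ≤ r) {h : ℝ → ℝ} (h_nonneg : ∀ s, 0 ≤ h s)
    (h_mono : MonotoneOn h (Ici 0))
    (h_loglip : ∀ c : ℝ, 1 ≤ c → ∀ s : ℝ, 0 ≤ s → h (c * s) ≤ c ^ r * h s)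
    {A D ε : ℝ} (hε : ε = 1 ∨ ε = -1) (hD : 0 < D) (hDA : D ≤ A) {s t : ℝ}
    (hs : 0 ≤ s) (hst : s ≤ t) (htD : t ≤ D) :
    h (A + ε * t) / (D + t) ^ r ≤ h (A + ε * s) / (D + s) ^ r := by
  have hDs : 0 < D + s := by linarith
  have hDt : 0 < D + t := by linarith
  rw [div_le_div_iff₀ (Real.rpow_pos_of_pos hDt r) (Real.rpow_pos_of_pos hDs r)]
  rcases hε with rfl | rfl
  · -- moving away from the minimum: the log-Lipschitz bound with `c = (A + t) / (A + s)`
    have hAs : 0 < A + s := by linarith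
    set c := (A + t) / (A + s)
    have hc : 1 ≤ c := (one_le_div hAs).2 (by linarith)
    have hlip : h (A + t) ≤ c ^ r * h (A + s) := by
      simpa only [one_mul, c, div_mul_cancel₀ _ hAs.ne'] using h_loglip c hc (A + s) hAs.le
    have hcD : c * (D + s) ≤ D + t := by
      rw [div_mul_eq_mul_div, div_le_iff₀ hAs]
      nlinarith [mul_nonneg (sub_nonneg.2 hst) (sub_nonneg.2 hDA)]
    calc h (A + 1 * t) * (D + s) ^ r = h (A + t) * (D + s) ^ r := by rw [one_mul]
      _ ≤ c ^ r * h (A + s) * (D + s) ^ r := by gcongr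
      _ = h (A + s) * (c * (D + s)) ^ r := by
          rw [Real.mul_rpow (by positivity) hDs.le]; ring
      _ ≤ h (A + 1 * s) * (D + t) ^ r := by
          rw [one_mul]; gcongr
          · exact h_nonneg _
  · -- moving towards the minimum: `h` decreases while the denominator grows
    have hmono : h (A + -1 * t) ≤ h (A + -1 * s) :=
      h_mono (show 0 ≤ A + -1 * t by linarith) (show 0 ≤ A + -1 * s by linarith) (by linarith)
    exact mul_le_mul hmono (Real.rpow_le_rpow hDs.le (by linarith) hr)
      (Real.rpow_nonneg hDs.le r) (h_nonneg _)

namespace PiecewiseLogLipschitzData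

variable {r : ℝ} {g : ℝ → ℝ}

theorem exists_mem_piece (d : PiecewiseLogLipschitzData r g) (x : ℝ) : ∃ j, x ∈ d.X j :=
  mem_iUnion.1 (d.cover ▸ mem_univ x)

theorem nonneg (d : PiecewiseLogLipschitzData r g) (x : ℝ) : 0 ≤ g x := by
  obtain ⟨j, hj⟩ := d.exists_mem_piece x
  exact d.eq_on_piece j x hj ▸ d.h_nonneg j _

theorem minima_nonempty (d : PiecewiseLogLipschitzData r g) : d.minima.Nonempty :=
  let ⟨j, _⟩ := d.exists_mem_piece 0
  ⟨d.x₀ j, j, rfl⟩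

theorem apply_le_two_rpow_mul_of_forall_abs_sub_le (d : PiecewiseLogLipschitzData r g)
    (hr : 0 ≤ r) (hgc : Continuous g) {x x' : ℝ} (hnear : ∀ k, |x - x'| ≤ |x - d.x₀ k|) : g x' ≤ 2 ^ r * g x := by
  rcases eq_or_ne x x' with rfl | hxx'
  · nlinarith [d.nonneg x, Real.one_le_rpow one_le_two hr]
  set D := |x - x'|
  have hD : 0 < D := abs_pos.2 (sub_ne_zero.2 hxx')
  set u := (x' - x) / D
  have hu : |u| = 1 := by rw [abs_div, abs_of_pos hD, abs_sub_comm, div_self hD.ne']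
  have hx' : x' = x + D * u := by rw [mul_div_cancel₀ _ hD.ne']; ring
  set φ : ℝ → ℝ := fun s => g (x + s * u) / (D + s) ^ r
  have hφ : φ D ≤ φ 0 := by
    refine ContinuousOn.apply_le_of_antitoneOn_cover (A := fun k => (x + · * u) ⁻¹' d.X k)
      Finset.univ hD.le ?_ ?_ ?_
    · refine (hgc.comp (by fun_prop)).continuousOn.div (by fun_prop) fun s hs => ?_
      exact (Real.rpow_pos_of_pos (by linarith [hs.1]) r).ne'
    · intro s _
      simpa using d.exists_mem_piece (x + s * u)
    · rintro k - s ⟨hsX, hs0, -⟩ t ⟨htX, -, htD⟩ hst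
      obtain ⟨ε, hε, habs⟩ := exists_sign_forall_abs_add_mul (a := x - d.x₀ k) hu
      have hpiece : ∀ s ∈ (x + · * u) ⁻¹' d.X k, 0 ≤ s → s ≤ D →
          g (x + s * u) = d.h k (|x - d.x₀ k| + ε * s) := fun s hs hs0 hsD => by
        rw [d.eq_on_piece k _ hs, ← habs s hs0 (hsD.trans (hnear k))]
        ring_nf
      simp only [φ, hpiece s hsX hs0 (hst.trans htD), hpiece t htX (hs0.trans hst) htD]
      exact apply_add_sign_mul_div_rpow_le hr (d.h_nonneg k) (d.h_mono k) (d.h_loglip k) hε hD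
        (hnear k) hs0 hst htD
  have hφD : φ D = g x' / 2 ^ r / D ^ r := by
    rw [div_div, ← Real.mul_rpow zero_le_two hD.le, two_mul, hx']
  have hφ0 : φ 0 = g x / D ^ r := by simp [φ]
  rwa [hφD, hφ0, div_le_div_iff_of_pos_right (Real.rpow_pos_of_pos hD r),
    div_le_iff₀ (Real.rpow_pos_of_pos two_pos r), mul_comm] at hφ

end PiecewiseLogLipschitzData

theorem stmt6_general (n : ℕ) (hn : 0 < n) (r : ℝ) (hr : 0 ≤ r)
    (g : Fin n → ℝ → ℝ)
    (hgc : ∀ i, Continuous (g i))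
    (d : ∀ i, PiecewiseLogLipschitzData r (g i)) :
    ∀ x : ℝ, ∃ x' ∈ ⋃ i, (d i).minima, ∀ i, g i x' ≤ (2:ℝ) ^ r * g i x := by
  intro x
  have hfin : (⋃ i, (d i).minima).Finite := finite_iUnion fun i => finite_range _
  have hne : (⋃ i, (d i).minima).Nonempty :=
    (d ⟨0, hn⟩).minima_nonempty.mono (subset_iUnion (fun i => (d i).minima) _)
  obtain ⟨x', hx', hnearest⟩ := exists_min_image _ (fun y => |x - y|) hfin hne
  refine ⟨x', hx', fun i => (d i).apply_le_two_rpow_mul_of_forall_abs_sub_le hr (hgc i) fun k => ?_⟩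
  exact hnearest _ (mem_iUnion.2 ⟨i, k, rfl⟩)

/-- Simultaneous approximation: for piecewise `r`-log-Lipschitz functions
`g 1, …, g n` and every `x ∈ ℝ`, there is `x'` in the union of the minima
such that `g i x' ≤ 2^r * g i x` for every `i`. -/
theorem stmt6 (n : ℕ) (hn : 0 < n) (r : ℝ) (hr : 0 ≤ r)
    (g : Fin n → ℝ → ℝ)
    (hg0 : ∀ i x, 0 ≤ g i x)
    (hgc : ∀ i, Continuous (g i))
    (d : ∀ i, PiecewiseLogLipschitzData r (g i)) :
    ∀ x : ℝ, ∃ x' ∈ ⋃ i, (d i).minima, ∀ i, g i x' ≤ (2:ℝ) ^ r * g i x :=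
  stmt6_general n hn r hr g hgc d
end

section
/- Let a₁,…,aₙ ∈ ℝ² and b₁,…,bₙ ≥ 0. Then for every unit vector x ∈ ℝ², there exist an index k ∈ [n] and a unit vector x' ∈ ℝ² which minimizes |aₖᵀy − bₖ| over all unit vectors y, satisfying |aᵢᵀx' − bᵢ| ≤ 4·|aᵢᵀx − bᵢ| for every i ∈ [n]. -/
open RealInnerProductSpace

-- helper lemmas

noncomputable def perp2 (a : EuclideanSpace ℝ (Fin 2)) : EuclideanSpace ℝ (Fin 2) :=
  (WithLp.equiv 2 (Fin 2 → ℝ)).symm ![-(a 1), a 0]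

lemma perp2_orth (a : EuclideanSpace ℝ (Fin 2)) : ⟪a, perp2 a⟫ = 0 := by
  simp [perp2, PiLp.inner_apply, Fin.sum_univ_two]
  ring

lemma perp2_norm (a : EuclideanSpace ℝ (Fin 2)) : ‖perp2 a‖ = ‖a‖ := by
  rw [← Real.sqrt_sq (norm_nonneg (perp2 a)), ← Real.sqrt_sq (norm_nonneg a),
    ← real_inner_self_eq_norm_sq, ← real_inner_self_eq_norm_sq]
  simp [perp2, PiLp.inner_apply, Fin.sum_univ_two, EuclideanSpace.norm_eq]
  ring_nf

lemma perp2_pyth (a y : EuclideanSpace ℝ (Fin 2)) :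
    ⟪a, y⟫ ^ 2 + ⟪y, perp2 a⟫ ^ 2 = ‖a‖ ^ 2 * ‖y‖ ^ 2 := by
  rw [← real_inner_self_eq_norm_sq, ← real_inner_self_eq_norm_sq]
  simp [perp2, PiLp.inner_apply, Fin.sum_univ_two, EuclideanSpace.norm_eq]
  ring_nf
  rw [Real.sq_sqrt (by positivity), Real.sq_sqrt (by positivity)]
  ring

noncomputable def pt2 (a : EuclideanSpace ℝ (Fin 2)) (b ε : ℝ) : EuclideanSpace ℝ (Fin 2) :=
  (min (b / ‖a‖) 1 / ‖a‖) • a + (ε * Real.sqrt (1 - min (b / ‖a‖) 1 ^ 2) / ‖a‖) • perp2 a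

lemma pt2_inner (a : EuclideanSpace ℝ (Fin 2)) (b ε : ℝ) (y : EuclideanSpace ℝ (Fin 2)) :
    ⟪y, pt2 a b ε⟫ = (min (b / ‖a‖) 1 / ‖a‖) * ⟪a, y⟫
      + (ε * Real.sqrt (1 - min (b / ‖a‖) 1 ^ 2) / ‖a‖) * ⟪y, perp2 a⟫ := by
  simp [pt2, PiLp.inner_apply, Fin.sum_univ_two, perp2]
  ring

section

variable {a : EuclideanSpace ℝ (Fin 2)} {b : ℝ}

lemma c_facts (ha : a ≠ 0) (hb : 0 ≤ b) :
    0 ≤ min (b / ‖a‖) 1 ∧ min (b / ‖a‖) 1 ≤ 1 ∧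
      Real.sqrt (1 - min (b / ‖a‖) 1 ^ 2) ^ 2 = 1 - min (b / ‖a‖) 1 ^ 2 := by
  have hr : 0 < ‖a‖ := norm_pos_iff.mpr ha
  have h0 : 0 ≤ min (b / ‖a‖) 1 := le_min (div_nonneg hb hr.le) zero_le_one
  have h1 : min (b / ‖a‖) 1 ≤ 1 := min_le_right _ _
  refine ⟨h0, h1, Real.sq_sqrt ?_⟩
  nlinarith

lemma min_scaled (ha : a ≠ 0) : min b ‖a‖ = min (b / ‖a‖) 1 * ‖a‖ := by
  have hr : 0 < ‖a‖ := norm_pos_iff.mpr ha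
  rw [min_mul_of_nonneg _ _ hr.le]
  field_simp

lemma pt2_inner_self (ha : a ≠ 0) (ε : ℝ) : ⟪a, pt2 a b ε⟫ = min b ‖a‖ := by
  have hr : 0 < ‖a‖ := norm_pos_iff.mpr ha
  rw [pt2_inner, perp2_orth, real_inner_self_eq_norm_sq, min_scaled ha]
  field_simp
  ring

lemma pt2_inner_perp (ha : a ≠ 0) (ε : ℝ) :
    ⟪pt2 a b ε, perp2 a⟫ = ε * Real.sqrt (1 - min (b / ‖a‖) 1 ^ 2) * ‖a‖ := by
  have hr : 0 < ‖a‖ := norm_pos_iff.mpr ha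
  rw [real_inner_comm, pt2_inner, perp2_orth,
    real_inner_self_eq_norm_sq, perp2_norm]
  field_simp
  ring

lemma pt2_unit (ha : a ≠ 0) (hb : 0 ≤ b) {ε : ℝ} (hε : ε ^ 2 = 1) : ‖pt2 a b ε‖ = 1 := by
  have hr : 0 < ‖a‖ := norm_pos_iff.mpr ha
  obtain ⟨h0, h1, hs⟩ := c_facts ha hb
  have key : ‖pt2 a b ε‖ ^ 2 = 1 := by
    rw [← real_inner_self_eq_norm_sq, pt2_inner, pt2_inner_self ha, pt2_inner_perp ha,
      min_scaled ha]
    field_simp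
    linear_combination (Real.sqrt (1 - min (b / ‖a‖) 1 ^ 2) ^ 2) * hε + hs
  nlinarith [norm_nonneg (pt2 a b ε)]

lemma key_real (u v r c s : ℝ) (hr : r ≠ 0) (hv : v ^ 2 = r ^ 2 - u ^ 2)
    (hs : s ^ 2 = 1 - c ^ 2) :
    (u - c * r) ^ 2 = r ^ 2 * (1 - (c / r * u + 1 * s / r * v))
      * (1 - (c / r * u + (-1) * s / r * v)) := by
  field_simp
  linear_combination s ^ 2 * hv + (r ^ 2 - u ^ 2) * hs

lemma pt2_key (ha : a ≠ 0) (hb : 0 ≤ b) (y : EuclideanSpace ℝ (Fin 2)) (hy : ‖y‖ = 1) :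
    (⟪a, y⟫ - min b ‖a‖) ^ 2
      = ‖a‖ ^ 2 * (1 - ⟪y, pt2 a b 1⟫) * (1 - ⟪y, pt2 a b (-1)⟫) := by
  have hr : 0 < ‖a‖ := norm_pos_iff.mpr ha
  obtain ⟨h0, h1, hs⟩ := c_facts ha hb
  have hpy := perp2_pyth a y
  rw [hy] at hpy
  have hv : ⟪y, perp2 a⟫ ^ 2 = ‖a‖ ^ 2 - ⟪a, y⟫ ^ 2 := by nlinarith [hpy]
  rw [pt2_inner, pt2_inner, min_scaled ha]
  exact key_real ⟪a, y⟫ ⟪y, perp2 a⟫ ‖a‖ _ _ hr.ne' hv hs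

lemma pt2_min (ha : a ≠ 0) (hb : 0 ≤ b) (ε : ℝ)
    (y : EuclideanSpace ℝ (Fin 2)) (hy : ‖y‖ = 1) :
    |⟪a, pt2 a b ε⟫ - b| ≤ |⟪a, y⟫ - b| := by
  have hr : 0 < ‖a‖ := norm_pos_iff.mpr ha
  rw [pt2_inner_self ha]
  have hcs : ⟪a, y⟫ ≤ ‖a‖ := by
    calc ⟪a, y⟫ ≤ ‖a‖ * ‖y‖ := real_inner_le_norm a y
    _ = ‖a‖ := by rw [hy, mul_one]
  rcases le_total b ‖a‖ with h | h
  · rw [min_eq_left h]; simp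
  · rw [min_eq_right h, abs_of_nonpos (by linarith)]
    calc -(‖a‖ - b) = b - ‖a‖ := by ring
    _ ≤ b - ⟪a, y⟫ := by linarith
    _ ≤ |⟪a, y⟫ - b| := by rw [abs_sub_comm]; exact le_abs_self _

lemma pt2_approx (ha : a ≠ 0) (hb : 0 ≤ b) (x x' : EuclideanSpace ℝ (Fin 2))
    (hx : ‖x‖ = 1) (hx' : ‖x'‖ = 1)
    (h1 : ‖x - x'‖ ≤ ‖x - pt2 a b 1‖) (h2 : ‖x - x'‖ ≤ ‖x - pt2 a b (-1)‖) :
    |⟪a, x'⟫ - b| ≤ 4 * |⟪a, x⟫ - b| := by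
  have hr : 0 < ‖a‖ := norm_pos_iff.mpr ha
  set p := pt2 a b 1 with hpdef
  set q := pt2 a b (-1) with hqdef
  have hp : ‖p‖ = 1 := pt2_unit ha hb (by norm_num)
  have hq : ‖q‖ = 1 := pt2_unit ha hb (by norm_num)
  have half : ∀ (y z : EuclideanSpace ℝ (Fin 2)), ‖y‖ = 1 → ‖z‖ = 1 →
      1 - ⟪y, z⟫ = ‖y - z‖ ^ 2 / 2 := by
    intro y z hy hz
    have := @norm_sub_sq_real (EuclideanSpace ℝ (Fin 2)) _ _ y z
    rw [hy, hz] at this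
    linarith
  have tri : ∀ z : EuclideanSpace ℝ (Fin 2), ‖x - x'‖ ≤ ‖x - z‖ →
      ‖x' - z‖ ^ 2 ≤ 4 * ‖x - z‖ ^ 2 := by
    intro z hle
    have t1 : ‖x' - z‖ ≤ ‖x' - x‖ + ‖x - z‖ := norm_sub_le_norm_sub_add_norm_sub x' x z
    rw [norm_sub_rev x' x] at t1
    nlinarith [norm_nonneg (x' - z), norm_nonneg (x - z), norm_nonneg (x - x')]
  have hp1 : 1 - ⟪x', p⟫ ≤ 4 * (1 - ⟪x, p⟫) := by
    rw [half x' p hx' hp, half x p hx hp]; linarith [tri p h1]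
  have hq1 : 1 - ⟪x', q⟫ ≤ 4 * (1 - ⟪x, q⟫) := by
    rw [half x' q hx' hq, half x q hx hq]; linarith [tri q h2]
  have hp0 : 0 ≤ 1 - ⟪x', p⟫ := by rw [half x' p hx' hp]; positivity
  have hq0 : 0 ≤ 1 - ⟪x', q⟫ := by rw [half x' q hx' hq]; positivity
  have hp0' : 0 ≤ 1 - ⟪x, p⟫ := by rw [half x p hx hp]; positivity
  have hq0' : 0 ≤ 1 - ⟪x, q⟫ := by rw [half x q hx hq]; positivity
  have k1 := pt2_key ha hb x hx
  have k2 := pt2_key ha hb x' hx'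
  have mulk : (1 - ⟪x', p⟫) * (1 - ⟪x', q⟫) ≤ (4 * (1 - ⟪x, p⟫)) * (4 * (1 - ⟪x, q⟫)) :=
    mul_le_mul hp1 hq1 hq0 (by linarith)
  have sq_ineq : (⟪a, x'⟫ - min b ‖a‖) ^ 2 ≤ 16 * (⟪a, x⟫ - min b ‖a‖) ^ 2 := by
    rw [k1, k2, ← hpdef, ← hqdef]
    nlinarith [mul_le_mul_of_nonneg_left mulk (sq_nonneg ‖a‖)]
  have abs_min : |⟪a, x'⟫ - min b ‖a‖| ≤ 4 * |⟪a, x⟫ - min b ‖a‖| := by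
    have h16 : (⟪a, x'⟫ - min b ‖a‖) ^ 2 ≤ (4 * |⟪a, x⟫ - min b ‖a‖|) ^ 2 := by
      rw [mul_pow, sq_abs]; nlinarith [sq_ineq]
    have hsq := Real.sqrt_le_sqrt h16
    rw [Real.sqrt_sq_eq_abs, Real.sqrt_sq (by positivity)] at hsq
    exact hsq
  rcases le_total b ‖a‖ with h | h
  · rwa [min_eq_left h] at abs_min
  · rw [min_eq_right h] at abs_min
    have cs1 : ⟪a, x'⟫ ≤ ‖a‖ := by
      calc ⟪a, x'⟫ ≤ ‖a‖ * ‖x'‖ := real_inner_le_norm a x'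
      _ = ‖a‖ := by rw [hx', mul_one]
    have cs2 : ⟪a, x⟫ ≤ ‖a‖ := by
      calc ⟪a, x⟫ ≤ ‖a‖ * ‖x‖ := real_inner_le_norm a x
      _ = ‖a‖ := by rw [hx, mul_one]
    rw [abs_of_nonpos (by linarith), abs_of_nonpos (by linarith)] at abs_min ⊢
    linarith

end

/-- For `a₁,…,aₙ ∈ ℝ²` and `b₁,…,bₙ ≥ 0`, for every unit vector `x ∈ ℝ²`
there is a unit vector `x'` that minimizes `|aₖᵀy − bₖ|` over unit vectors `y`
for some `k ∈ [n]`, and satisfies `|aᵢᵀx' − bᵢ| ≤ 4 |aᵢᵀx − bᵢ|` for every `i`. -/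
theorem stmt8 (n : ℕ) (hn : 0 < n)
    (a : Fin n → EuclideanSpace ℝ (Fin 2)) (b : Fin n → ℝ)
    (hb : ∀ i, 0 ≤ b i) :
    ∀ x : EuclideanSpace ℝ (Fin 2), ‖x‖ = 1 →
      ∃ x' : EuclideanSpace ℝ (Fin 2), ‖x'‖ = 1 ∧
        (∃ k : Fin n, ∀ y : EuclideanSpace ℝ (Fin 2), ‖y‖ = 1 →
          |⟪a k, x'⟫ - b k| ≤ |⟪a k, y⟫ - b k|) ∧
        ∀ i, |⟪a i, x'⟫ - b i| ≤ 4 * |⟪a i, x⟫ - b i| := by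
  intro x hx
  by_cases hA : ∃ k, a k = 0
  · obtain ⟨k, hk⟩ := hA
    refine ⟨x, hx, ⟨k, fun y hy => ?_⟩, fun i => ?_⟩
    · rw [hk]; simp
    · have h0 : (0:ℝ) ≤ |⟪a i, x⟫ - b i| := abs_nonneg _
      linarith [le_abs_self (⟪a i, x⟫ - b i)]
  · push_neg at hA
    obtain ⟨⟨k, σ⟩, -, hz⟩ := Finset.exists_min_image (Finset.univ : Finset (Fin n × Bool))
      (fun z => ‖x - pt2 (a z.1) (b z.1) (if z.2 then 1 else -1)‖)
      ⟨(⟨0, hn⟩, true), Finset.mem_univ _⟩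
    refine ⟨pt2 (a k) (b k) (if σ then 1 else -1),
      pt2_unit (hA k) (hb k) (by cases σ <;> norm_num),
      ⟨k, fun y hy => pt2_min (hA k) (hb k) _ y hy⟩, fun i => ?_⟩
    refine pt2_approx (hA i) (hb i) x _ hx
      (pt2_unit (hA k) (hb k) (by cases σ <;> norm_num)) ?_ ?_
    · simpa using hz (i, true) (Finset.mem_univ _)
    · simpa using hz (i, false) (Finset.mem_univ _)
end

section
/- Let A ∈ ℝ^{n×2} with rows a₁ᵀ,…,aₙᵀ and b ∈ ℝⁿ with nonnegative entries. Let x* be a unit vector minimizing ‖Ax − b‖₁ over unit vectors x ∈ ℝ². Then there is a finite set C of O(n) unit vectors (the minimizers of the individual residuals |aᵢᵀy − bᵢ| over unit vectors y) containing a vector x' with ‖Ax' − b‖₁ ≤ 4·‖Ax* − b‖₁. -/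
/-
Write `aᵢ = cᵢ • uᵢ` with `cᵢ ≥ 0` and `uᵢ` a unit vector. On the unit circle the residual
`|cᵢ ⟪uᵢ, z⟫ - bᵢ|` equals its minimum plus `cᵢ |⟪uᵢ, z⟫ - cos αᵢ|`, where `cos αᵢ` is `bᵢ / cᵢ`
clamped to `[-1, 1]`; its minimizers are the unit vectors at angle `αᵢ` from `uᵢ`, and we take
the one, `yᵢ`, on the same side of `uᵢ` as `x*`. If a unit vector `z` is at least as close to
`x*` as `yᵢ`, the triangle inequality for angles gives
`|∠(uᵢ, z) - ∠(uᵢ, x*)| ≤ |∠(uᵢ, x*) - αᵢ|`, and a half-angle estimate turns this into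
residual `i` at `z` being at most four times residual `i` at `x*`. Hence the `yⱼ` closest to
`x*` approximates every residual within a factor of four at once.
-/

open Real RealInnerProductSpace InnerProductGeometry Module Set

namespace Real

theorem abs_sin_add_le (x y : ℝ) : |sin (x + y)| ≤ |sin x| + |sin y| := by
  rw [sin_add]
  calc |sin x * cos y + cos x * sin y| ≤ |sin x| * |cos y| + |cos x| * |sin y| := by
        simpa only [abs_mul] using abs_add_le (sin x * cos y) (cos x * sin y)
    _ ≤ |sin x| * 1 + 1 * |sin y| := by gcongr <;> exact abs_cos_le_one _
    _ = |sin x| + |sin y| := by ring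

theorem abs_sin_le_abs_sin {x y : ℝ} (hxy : |x| ≤ |y|) (hy : |y| ≤ π / 2) :
    |sin x| ≤ |sin y| := by
  rw [abs_sin_eq_sin_abs_of_abs_le_pi (by linarith [pi_pos]),
    abs_sin_eq_sin_abs_of_abs_le_pi (by linarith [pi_pos])]
  exact sin_le_sin_of_le_of_le_pi_div_two (by linarith [pi_pos, abs_nonneg x]) hy hxy

theorem sin_sq_sub_sin_sq (x y : ℝ) : sin x ^ 2 - sin y ^ 2 = sin (x + y) * sin (x - y) := by
  rw [sin_add, sin_sub]
  linear_combination sin y ^ 2 * sin_sq_add_cos_sq x - sin x ^ 2 * sin_sq_add_cos_sq y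

theorem abs_cos_sub_cos_le_four_mul {θ α ζ : ℝ} (hθ : θ ∈ Icc 0 π) (hα : α ∈ Icc 0 π)
    (hζ : |ζ - θ| ≤ |θ - α|) : |cos ζ - cos α| ≤ 4 * |cos θ - cos α| := by
  set A := (θ + α) / 2
  set d := (θ - α) / 2
  have hd : |d| ≤ π / 2 := by
    have : |θ - α| ≤ π := abs_sub_le_iff.2 ⟨by linarith [hθ.2, hα.1], by linarith [hθ.1, hα.2]⟩
    rw [abs_div, abs_two]
    linarith
  have hθα : |cos θ - cos α| = 2 * |sin A| * |sin d| := by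
    rw [cos_sub_cos, abs_mul, abs_mul, abs_neg, abs_two]
  have hζθ : |cos ζ - cos θ| = 2 * |sin ((ζ + θ) / 2)| * |sin ((ζ - θ) / 2)| := by
    rw [cos_sub_cos, abs_mul, abs_mul, abs_neg, abs_two]
  have h_half : |sin ((ζ - θ) / 2)| ≤ |sin d| :=
    abs_sin_le_abs_sin (by simp only [d, abs_div, abs_two]; linarith) hd
  have h_dA : |sin d| ≤ |sin A| := by
    rw [← sq_le_sq, ← sub_nonneg, sin_sq_sub_sin_sq, show A + d = θ by ring,
      show A - d = α by ring]
    exact mul_nonneg (sin_nonneg_of_nonneg_of_le_pi hθ.1 hθ.2)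
      (sin_nonneg_of_nonneg_of_le_pi hα.1 hα.2)
  have h_mid : |sin ((ζ + θ) / 2)| ≤ 3 * |sin A| :=
    calc |sin ((ζ + θ) / 2)| = |sin (A + d + (ζ - θ) / 2)| := by
          rw [show A + d = θ by ring]; ring_nf
      _ ≤ |sin A| + |sin d| + |sin ((ζ - θ) / 2)| := by
        linarith [abs_sin_add_le (A + d) ((ζ - θ) / 2), abs_sin_add_le A d]
      _ ≤ 3 * |sin A| := by linarith
  calc |cos ζ - cos α| ≤ |cos ζ - cos θ| + |cos θ - cos α| := abs_sub_le _ _ _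
    _ ≤ 2 * (3 * |sin A|) * |sin d| + |cos θ - cos α| := by rw [hζθ]; gcongr
    _ = 4 * |cos θ - cos α| := by rw [hθα]; ring

end Real

theorem exists_mem_Icc_forall_abs_mul_sub_eq {c : ℝ} (hc : 0 ≤ c) (b : ℝ) :
    ∃ β ∈ Icc (-1 : ℝ) 1, ∀ m ∈ Icc (-1 : ℝ) 1, |c * m - b| = |c * β - b| + c * |m - β| := by
  rcases hc.eq_or_lt with rfl | hc
  · exact ⟨0, by norm_num, fun m _ => by simp⟩
  rcases le_or_gt b (-c) with hb | hb
  · refine ⟨-1, by norm_num, fun m hm => ?_⟩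
    rw [abs_of_nonneg (by nlinarith [hm.1]), abs_of_nonneg (by linarith),
      abs_of_nonneg (by linarith [hm.1])]
    ring
  rcases le_or_gt c b with hb' | hb'
  · refine ⟨1, by norm_num, fun m hm => ?_⟩
    rw [abs_of_nonpos (by nlinarith [hm.2]), abs_of_nonpos (by linarith),
      abs_of_nonpos (by linarith [hm.2])]
    ring
  · refine ⟨b / c, ⟨?_, ?_⟩, fun m _ => ?_⟩
    · rw [le_div_iff₀ hc]; linarith
    · rw [div_le_iff₀ hc]; linarith
    · rw [mul_div_cancel₀ b hc.ne', sub_self, abs_zero, zero_add]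
      nth_rw 1 [← mul_div_cancel₀ b hc.ne']
      rw [← mul_sub, abs_mul, abs_of_pos hc]

section
variable {E : Type*} [NormedAddCommGroup E] [InnerProductSpace ℝ E]

theorem cos_angle_of_norm_eq_one {u x : E} (hu : ‖u‖ = 1) (hx : ‖x‖ = 1) :
    cos (angle u x) = ⟪u, x⟫ := by
  simp [cos_angle, hu, hx]

theorem abs_angle_sub_angle_le (u x z : E) : |angle u z - angle u x| ≤ angle x z := by
  rw [abs_sub_le_iff]
  constructor
  · linarith [angle_le_angle_add_angle u x z]
  · linarith [angle_le_angle_add_angle u z x, angle_comm x z]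

theorem inner_le_inner_of_norm_sub_le {x y z : E} (hyz : ‖y‖ = ‖z‖) (h : ‖z - x‖ ≤ ‖y - x‖) :
    ⟪y, x⟫ ≤ ⟪z, x⟫ := by
  have := pow_le_pow_left₀ (norm_nonneg _) h 2
  rw [norm_sub_sq_real, norm_sub_sq_real, hyz] at this
  linarith

theorem exists_unit_orthogonal_inner_eq_sin_angle [Fact (finrank ℝ E = 2)] {u x : E}
    (hu : ‖u‖ = 1) (hx : ‖x‖ = 1) :
    ∃ v : E, ‖v‖ = 1 ∧ ⟪u, v⟫ = 0 ∧ ⟪v, x⟫ = sin (angle u x) := by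
  have := FiniteDimensional.of_fact_finrank_eq_two (K := ℝ) (V := E)
  let o : Orientation ℝ E (Fin 2) := (finBasisOfFinrankEq ℝ E Fact.out).orientation
  have hsin : sin (angle u x) = |o.areaForm u x| := by
    have h := o.inner_sq_add_areaForm_sq u x
    have hs := sin_angle_mul_norm_mul_norm u x
    rw [hu, hx] at h
    rw [hu, hx, real_inner_self_eq_norm_sq, real_inner_self_eq_norm_sq, hu, hx] at hs
    have h1 : 1 ^ 2 * 1 ^ 2 - ⟪u, x⟫ * ⟪u, x⟫ = o.areaForm u x ^ 2 := by linarith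
    simpa only [h1, sqrt_sq_eq_abs, mul_one] using hs
  rcases le_total 0 (o.areaForm u x) with h | h
  · refine ⟨o.rightAngleRotation u, by simp [hu], by simp, ?_⟩
    rw [o.inner_rightAngleRotation_left, hsin, abs_of_nonneg h]
  · refine ⟨-o.rightAngleRotation u, by simp [hu], by simp, ?_⟩
    rw [inner_neg_left, o.inner_rightAngleRotation_left, hsin, abs_of_nonpos h]

theorem exists_unit_inner_eq_forall_le_four_mul [Fact (finrank ℝ E = 2)] {u x : E}
    (hu : ‖u‖ = 1) (hx : ‖x‖ = 1) {β : ℝ} (hβ : β ∈ Icc (-1) 1) :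
    ∃ y : E, ‖y‖ = 1 ∧ ⟪u, y⟫ = β ∧ ∀ z : E, ‖z‖ = 1 → ‖z - x‖ ≤ ‖y - x‖ →
      |⟪u, z⟫ - β| ≤ 4 * |⟪u, x⟫ - β| := by
  obtain ⟨v, hv, huv, hvx⟩ := exists_unit_orthogonal_inner_eq_sin_angle hu hx
  set α := arccos β
  have hcos : cos α = β := cos_arccos hβ.1 hβ.2
  set y := cos α • u + sin α • v
  have hy : ‖y‖ = 1 := by
    have h := norm_add_sq_eq_norm_sq_add_norm_sq_real (x := cos α • u) (y := sin α • v)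
      (by rw [real_inner_smul_left, real_inner_smul_right, huv]; ring)
    rw [norm_smul, norm_smul, hu, hv, norm_eq_abs, norm_eq_abs] at h
    nlinarith [sin_sq_add_cos_sq α, norm_nonneg y, sq_abs (sin α), sq_abs (cos α)]
  have hyx : ⟪y, x⟫ = cos (angle u x - α) := by
    rw [inner_add_left, real_inner_smul_left, real_inner_smul_left, hvx,
      ← cos_angle_of_norm_eq_one hu hx, cos_sub]
    ring
  refine ⟨y, hy, ?_, fun z hz hzx => ?_⟩
  · rw [inner_add_right, real_inner_smul_right, real_inner_smul_right, huv,
      real_inner_self_eq_norm_sq, hu, hcos]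
    ring
  have hangle : angle x z ≤ |angle u x - α| := by
    have h := inner_le_inner_of_norm_sub_le (hy.trans hz.symm) hzx
    rw [hyx, ← cos_abs, real_inner_comm x z, ← cos_angle_of_norm_eq_one hx hz] at h
    refine (strictAntiOn_cos.le_iff_ge ⟨abs_nonneg _, ?_⟩
      ⟨angle_nonneg _ _, angle_le_pi _ _⟩).1 h
    rw [abs_sub_le_iff]
    constructor <;> linarith [angle_nonneg u x, angle_le_pi u x, arccos_nonneg β, arccos_le_pi β]
  have h := abs_cos_sub_cos_le_four_mul ⟨angle_nonneg u x, angle_le_pi u x⟩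
    ⟨arccos_nonneg β, arccos_le_pi β⟩ ((abs_angle_sub_angle_le u x z).trans hangle)
  rwa [cos_angle_of_norm_eq_one hu hz, cos_angle_of_norm_eq_one hu hx, hcos] at h

theorem exists_unit_minimizer_forall_le_four_mul [Fact (finrank ℝ E = 2)] (a : E) (b : ℝ)
    {x : E} (hx : ‖x‖ = 1) :
    ∃ y : E, ‖y‖ = 1 ∧ (∀ z : E, ‖z‖ = 1 → |⟪a, y⟫ - b| ≤ |⟪a, z⟫ - b|) ∧
      ∀ z : E, ‖z‖ = 1 → ‖z - x‖ ≤ ‖y - x‖ → |⟪a, z⟫ - b| ≤ 4 * |⟪a, x⟫ - b| := by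
  obtain ⟨c, hc, u, hu, rfl⟩ : ∃ c : ℝ, 0 ≤ c ∧ ∃ u : E, ‖u‖ = 1 ∧ a = c • u := by
    by_cases ha : a = 0
    · exact ⟨0, le_rfl, x, hx, by simp [ha]⟩
    · exact ⟨‖a‖, norm_nonneg a, ‖a‖⁻¹ • a, by simp [norm_smul, ha], by simp [smul_smul, ha]⟩
  obtain ⟨β, hβ, hres⟩ := exists_mem_Icc_forall_abs_mul_sub_eq hc b
  have hres' : ∀ z : E, ‖z‖ = 1 → |⟪c • u, z⟫ - b| = |c * β - b| + c * |⟪u, z⟫ - β| := by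
    intro z hz
    rw [real_inner_smul_left]
    exact hres _ (abs_le.1 (by simpa [hu, hz] using abs_real_inner_le_norm u z))
  obtain ⟨y, hy, huy, happrox⟩ := exists_unit_inner_eq_forall_le_four_mul hu hx hβ
  refine ⟨y, hy, fun z hz => ?_, fun z hz hzx => ?_⟩
  · rw [hres' y hy, hres' z hz, huy, sub_self, abs_zero, mul_zero, add_zero]
    exact le_add_of_nonneg_right (by positivity)
  · rw [hres' z hz, hres' x hx]
    nlinarith [abs_nonneg (c * β - b), mul_le_mul_of_nonneg_left (happrox z hz hzx) hc]

end

theorem stmt9_general (n : ℕ) (hn : 0 < n)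
    (a : Fin n → EuclideanSpace ℝ (Fin 2)) (b : Fin n → ℝ)
    (xstar : EuclideanSpace ℝ (Fin 2)) (hxstar : ‖xstar‖ = 1)
    (C : Set (EuclideanSpace ℝ (Fin 2)))
    (hC : C = {y | ‖y‖ = 1 ∧ ∃ i : Fin n,
      ∀ z : EuclideanSpace ℝ (Fin 2), ‖z‖ = 1 →
        |⟪a i, y⟫ - b i| ≤ |⟪a i, z⟫ - b i|}) :
    ∃ x' ∈ C, ∑ i, |⟪a i, x'⟫ - b i| ≤ 4 * ∑ i, |⟪a i, xstar⟫ - b i| := by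
  have : Fact (finrank ℝ (EuclideanSpace ℝ (Fin 2)) = 2) := ⟨finrank_euclideanSpace_fin⟩
  choose y hy hmin happrox using
    fun i => exists_unit_minimizer_forall_le_four_mul (a i) (b i) hxstar
  obtain ⟨j, -, hj⟩ := Finset.exists_min_image Finset.univ (fun i => ‖y i - xstar‖)
    ⟨⟨0, hn⟩, Finset.mem_univ _⟩
  refine ⟨y j, hC ▸ ⟨hy j, j, hmin j⟩, ?_⟩
  rw [Finset.mul_sum]
  exact Finset.sum_le_sum fun i _ => happrox i (y j) (hy j) (hj i (Finset.mem_univ i))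

/-- Constrained `ℓ₁` regression over the unit circle in `ℝ²`: if `x*` is a
unit vector minimizing `‖Ax − b‖₁` over unit vectors, then the set `C` of unit
vectors minimizing an individual residual `|aᵢᵀy − bᵢ|` over unit vectors
contains a vector `x'` with `‖Ax' − b‖₁ ≤ 4 ‖Ax* − b‖₁`. -/
theorem stmt9 (n : ℕ) (hn : 0 < n)
    (a : Fin n → EuclideanSpace ℝ (Fin 2)) (b : Fin n → ℝ)
    (hb : ∀ i, 0 ≤ b i)
    (xstar : EuclideanSpace ℝ (Fin 2)) (hxstar : ‖xstar‖ = 1)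
    (hopt : ∀ y : EuclideanSpace ℝ (Fin 2), ‖y‖ = 1 →
      ∑ i, |⟪a i, xstar⟫ - b i| ≤ ∑ i, |⟪a i, y⟫ - b i|)
    (C : Set (EuclideanSpace ℝ (Fin 2)))
    (hC : C = {y | ‖y‖ = 1 ∧ ∃ i : Fin n,
      ∀ z : EuclideanSpace ℝ (Fin 2), ‖z‖ = 1 →
        |⟪a i, y⟫ - b i| ≤ |⟪a i, z⟫ - b i|}) :
    ∃ x' ∈ C, ∑ i, |⟪a i, x'⟫ - b i| ≤ 4 * ∑ i, |⟪a i, xstar⟫ - b i| :=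
  stmt9_general n hn a b xstar hxstar C hC
end

section
/- Let p₁,…,pₙ ∈ ℝ² and lines ℓ₁,…,ℓₙ in ℝ², and let v be a fixed unit vector. For each i ∈ [n] let λᵢ ∈ ℝ ∪ {∞} be the minimal-magnitude scalar such that dist(pᵢ − λᵢ·v, ℓᵢ) is minimized over λ ∈ ℝ (λᵢ = ∞ if the minimizing set is infinite), and assume some λᵢ is finite. Let k ∈ argmin_{i} |λᵢ|. Then for every i ∈ [n], dist(pᵢ − λₖ·v, ℓᵢ) ≤ 2·dist(pᵢ, ℓᵢ). -/
/-!
With `ℓ = {a + s d}`, `‖d‖ = 1`, the distance from `p - μ v` to `ℓ` is `|B - μ C|` where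
`B = (p - a) × d` and `C = v × d`. If `C = 0` (`v` parallel to `ℓ`) this does not depend on `μ`.
Otherwise `B / C` is the unique minimiser, so `|λ k| ≤ |B / C|`, and the triangle inequality gives
`|B - λ k C| ≤ |B| + |B / C| |C| = 2 |B|`.
-/

open Metric

def cross (x y : EuclideanSpace ℝ (Fin 2)) : ℝ := x 0 * y 1 - x 1 * y 0

lemma cross_sub_smul_left (x y d : EuclideanSpace ℝ (Fin 2)) (μ : ℝ) :
    cross (x - μ • y) d = cross x d - μ * cross y d := by
  simp only [cross, PiLp.sub_apply, PiLp.smul_apply, smul_eq_mul]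
  ring

lemma dist_add_smul_sq (x a d : EuclideanSpace ℝ (Fin 2)) (hd : ‖d‖ = 1) (s : ℝ) :
    dist x (a + s • d) ^ 2 = cross (x - a) d ^ 2 + (s - inner ℝ (x - a) d) ^ 2 := by
  have hd2 : d 0 ^ 2 + d 1 ^ 2 = 1 := by
    have := EuclideanSpace.real_norm_sq_eq d
    rw [hd, Fin.sum_univ_two] at this
    linarith
  rw [dist_eq_norm, EuclideanSpace.real_norm_sq_eq, Fin.sum_univ_two]
  simp only [cross, EuclideanSpace.inner_eq_star_dotProduct, dotProduct, Fin.sum_univ_two,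
    PiLp.sub_apply, PiLp.add_apply, PiLp.smul_apply, smul_eq_mul, star_trivial]
  linear_combination (s ^ 2 - (x 0 - a 0) ^ 2 - (x 1 - a 1) ^ 2) * hd2

lemma infDist_line_eq_abs_cross (x a d : EuclideanSpace ℝ (Fin 2)) (hd : ‖d‖ = 1) :
    infDist x {q | ∃ s : ℝ, q = a + s • d} = |cross (x - a) d| := by
  have hline : ({q | ∃ s : ℝ, q = a + s • d} : Set _).Nonempty := ⟨a, 0, by simp⟩
  refine le_antisymm ?_ ((le_infDist hline).2 ?_)
  · calc infDist x {q | ∃ s : ℝ, q = a + s • d}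
          ≤ dist x (a + inner ℝ (x - a) d • d) := infDist_le_dist_of_mem ⟨_, rfl⟩
      _ = |cross (x - a) d| := by
        rw [← Real.sqrt_sq dist_nonneg, dist_add_smul_sq x a d hd, sub_self,
          zero_pow two_ne_zero, add_zero, Real.sqrt_sq_eq_abs]
  · rintro _ ⟨s, rfl⟩
    rw [← abs_of_nonneg (dist_nonneg (x := x)), ← sq_le_sq, dist_add_smul_sq x a d hd]
    exact le_add_of_nonneg_right (sq_nonneg _)

lemma setOf_forall_abs_sub_mul_le_eq_singleton {B C : ℝ} (hC : C ≠ 0) :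
    {μ : ℝ | ∀ μ' : ℝ, |B - μ * C| ≤ |B - μ' * C|} = {B / C} := by
  have hzero : B - B / C * C = 0 := by field_simp; ring
  ext μ
  simp only [Set.mem_ofPred_eq, Set.mem_singleton_iff]
  constructor
  · intro h
    have h' := h (B / C)
    rw [hzero, abs_zero, abs_nonpos_iff] at h'
    field_simp
    linarith
  · rintro rfl μ'
    simp [hzero]

lemma abs_sub_mul_le_two_mul_abs {B C m : ℝ} (hm : C ≠ 0 → |m| ≤ |B / C|) :
    |B - m * C| ≤ 2 * |B| := by
  rcases eq_or_ne C 0 with rfl | hC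
  · simp only [mul_zero, sub_zero]
    linarith [abs_nonneg B]
  calc |B - m * C| ≤ |B| + |m| * |C| := by rw [← abs_mul]; exact abs_sub _ _
    _ ≤ |B| + |B / C| * |C| := by
      linarith [mul_le_mul_of_nonneg_right (hm hC) (abs_nonneg C)]
    _ = 2 * |B| := by rw [← abs_mul, div_mul_cancel₀ B hC]; ring

theorem stmt12_general (n : ℕ)
    (p : Fin n → EuclideanSpace ℝ (Fin 2))
    (ℓ : Fin n → Set (EuclideanSpace ℝ (Fin 2)))
    (hline : ∀ i, ∃ a d : EuclideanSpace ℝ (Fin 2), ‖d‖ = 1 ∧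
      ℓ i = {q | ∃ s : ℝ, q = a + s • d})
    (v : EuclideanSpace ℝ (Fin 2))
    (Λ : Fin n → Set ℝ)
    (hΛ : ∀ i, Λ i = {μ | ∀ μ' : ℝ,
      Metric.infDist (p i - μ • v) (ℓ i) ≤ Metric.infDist (p i - μ' • v) (ℓ i)})
    (lam : Fin n → ℝ)
    (hlam : ∀ i, (Λ i).Finite → lam i ∈ Λ i ∧ ∀ μ ∈ Λ i, |lam i| ≤ |μ|)
    (k : Fin n)
    (hk : ∀ i, (Λ i).Finite → |lam k| ≤ |lam i|) :
    ∀ i, Metric.infDist (p i - lam k • v) (ℓ i) ≤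
      2 * Metric.infDist (p i) (ℓ i) := by
  intro i
  obtain ⟨a, d, hd, hℓ⟩ := hline i
  set B := cross (p i - a) d
  set C := cross v d
  have hdist : ∀ μ : ℝ, infDist (p i - μ • v) (ℓ i) = |B - μ * C| := fun μ ↦ by
    rw [hℓ, infDist_line_eq_abs_cross _ a d hd, sub_right_comm, cross_sub_smul_left]
  have hdist₀ : infDist (p i) (ℓ i) = |B| := by simpa using hdist 0
  rw [hdist, hdist₀]
  refine abs_sub_mul_le_two_mul_abs fun hC ↦ ?_
  have hΛi : Λ i = {B / C} := by
    simpa only [hΛ i, hdist] using setOf_forall_abs_sub_mul_le_eq_singleton hC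
  have hfin : (Λ i).Finite := hΛi ▸ Set.finite_singleton _
  have hlami : lam i = B / C := by simpa [hΛi] using (hlam i hfin).1
  exact hlami ▸ hk i hfin

/-- Step 2 of points-to-lines alignment. For each `i`, let `Λ i` be the set of
scalars `μ` minimizing `dist(pᵢ − μ v, ℓᵢ)` over `μ ∈ ℝ`; call `i` *finite* if
`Λ i` is finite, and in that case let `λ i ∈ Λ i` have minimal magnitude.
If some index is finite and `k` is a finite index minimizing `|λ i|`, then
translating by `λ k • v` at most doubles every point-to-line distance. -/
theorem stmt12 (n : ℕ)
    (p : Fin n → EuclideanSpace ℝ (Fin 2))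
    (ℓ : Fin n → Set (EuclideanSpace ℝ (Fin 2)))
    (hline : ∀ i, ∃ a d : EuclideanSpace ℝ (Fin 2), ‖d‖ = 1 ∧
      ℓ i = {q | ∃ s : ℝ, q = a + s • d})
    (v : EuclideanSpace ℝ (Fin 2)) (hv : ‖v‖ = 1)
    (Λ : Fin n → Set ℝ)
    (hΛ : ∀ i, Λ i = {μ | ∀ μ' : ℝ,
      Metric.infDist (p i - μ • v) (ℓ i) ≤ Metric.infDist (p i - μ' • v) (ℓ i)})
    (lam : Fin n → ℝ)
    (hlam : ∀ i, (Λ i).Finite → lam i ∈ Λ i ∧ ∀ μ ∈ Λ i, |lam i| ≤ |μ|)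
    (k : Fin n) (hkfin : (Λ k).Finite)
    (hk : ∀ i, (Λ i).Finite → |lam k| ≤ |lam i|) :
    ∀ i, Metric.infDist (p i - lam k • v) (ℓ i) ≤
      2 * Metric.infDist (p i) (ℓ i) :=
  stmt12_general n p ℓ hline v Λ hΛ lam hlam k hk
end

section
/- Let v = (v_x, v_y) be a unit vector with v_y ≠ 0, and let p, q ∈ ℝ² with ‖p − q‖ = r₁ > 0 such that p lies on the x-axis and q lies on the line spanned by v. Let P = r₁·[[v_x/v_y, 1],[0,0]] and Q = Pᵀ. Then there exists a unit vector x ∈ ℝ² such that p = Px and q = Qx. -/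
/-!
The witness is the quarter turn of the unit vector `(p - q) / r₁`, namely
`x = (q_y, p_x - q_x) / r₁`, which is a unit vector because rotations preserve length.
Since `p_y = 0` and `q_x = (v_x / v_y) q_y` on the line spanned by `v`, the factor `r₁`
cancels and `P x = (p_x, 0)`, `Q x = ((v_x / v_y) q_y, q_y)`.
-/

open Matrix

lemma EuclideanSpace.norm_quarterTurn (w : EuclideanSpace ℝ (Fin 2)) :
    ‖!₂[-w 1, w 0]‖ = ‖w‖ := by
  rw [← sq_eq_sq₀ (norm_nonneg _) (norm_nonneg _), EuclideanSpace.real_norm_sq_eq,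
    EuclideanSpace.real_norm_sq_eq]
  simp [Fin.sum_univ_two, add_comm]

lemma smul_mulVec_inv_smul {n : Type*} [Fintype n] {r : ℝ} (hr : r ≠ 0)
    (M : Matrix n n ℝ) (y : n → ℝ) : (r • M) *ᵥ (r⁻¹ • y) = M *ᵥ y := by
  rw [smul_mulVec, mulVec_smul, smul_smul, mul_inv_cancel₀ hr, one_smul]

section AxisAndLine

variable (c : ℝ) {p q : EuclideanSpace ℝ (Fin 2)}

lemma mulVec_quarterTurn_sub_eq_left (hp : p 1 = 0) (hq : q 0 = c * q 1) :
    !![c, 1; 0, 0] *ᵥ ⇑(!₂[-(p - q) 1, (p - q) 0]) = ⇑p := by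
  ext i
  fin_cases i <;> simp [mulVec, dotProduct, Fin.sum_univ_two, hp, hq]

lemma mulVec_quarterTurn_sub_eq_right (hp : p 1 = 0) (hq : q 0 = c * q 1) :
    !![c, 1; 0, 0]ᵀ *ᵥ ⇑(!₂[-(p - q) 1, (p - q) 0]) = ⇑q := by
  ext i
  fin_cases i <;> simp [mulVec, dotProduct, Fin.sum_univ_two, hp, hq]

theorem exists_unit_mulVec_eq_of_mem_axis_of_mem_line (hp : p 1 = 0) (hq : q 0 = c * q 1)
    (hpq : p ≠ q) :
    ∃ x : EuclideanSpace ℝ (Fin 2), ‖x‖ = 1 ∧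
      ⇑p = (‖p - q‖ • !![c, 1; 0, 0]) *ᵥ ⇑x ∧ ⇑q = (‖p - q‖ • !![c, 1; 0, 0])ᵀ *ᵥ ⇑x := by
  have hr : ‖p - q‖ ≠ 0 := norm_ne_zero_iff.mpr (sub_ne_zero.mpr hpq)
  refine ⟨‖p - q‖⁻¹ • !₂[-(p - q) 1, (p - q) 0], ?_, ?_, ?_⟩
  · rw [norm_smul, EuclideanSpace.norm_quarterTurn, norm_inv, norm_norm, inv_mul_cancel₀ hr]
  · rw [WithLp.ofLp_smul, smul_mulVec_inv_smul hr, mulVec_quarterTurn_sub_eq_left c hp hq]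
  · rw [WithLp.ofLp_smul, transpose_smul, smul_mulVec_inv_smul hr,
      mulVec_quarterTurn_sub_eq_right c hp hq]

end AxisAndLine

theorem stmt14_general (v p q : EuclideanSpace ℝ (Fin 2))
    (hvy : v 1 ≠ 0)
    (hp_axis : p 1 = 0) (hq_line : ∃ t : ℝ, q = t • v)
    (r₁ : ℝ) (hr₁ : r₁ = ‖p - q‖) (hr₁pos : 0 < r₁)
    (P Q : Matrix (Fin 2) (Fin 2) ℝ)
    (hP : P = r₁ • !![v 0 / v 1, 1; 0, 0])
    (hQ : Q = P.transpose) :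
    ∃ x : EuclideanSpace ℝ (Fin 2), ‖x‖ = 1 ∧ p = P.mulVec x ∧ q = Q.mulVec x := by
  obtain ⟨t, rfl⟩ := hq_line
  have hq : (t • v) 0 = v 0 / v 1 * (t • v) 1 := by
    simp only [PiLp.smul_apply, smul_eq_mul]
    field_simp
  have hpq : p ≠ t • v := sub_ne_zero.mp (norm_pos_iff.mp (hr₁ ▸ hr₁pos))
  subst hQ hP hr₁
  exact exists_unit_mulVec_eq_of_mem_axis_of_mem_line _ hp_axis hq hpq

/-- Converse direction: if `p` lies on the `x`-axis and `q` on the line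
spanned by the unit vector `v` (with `v_y ≠ 0`), `‖p − q‖ = r₁ > 0`,
`P = r₁ • [[v_x/v_y, 1],[0,0]]` and `Q = Pᵀ`, then there is a unit vector `x`
with `p = P x` and `q = Q x`. -/
theorem stmt14 (v p q : EuclideanSpace ℝ (Fin 2))
    (hv : ‖v‖ = 1) (hvy : v 1 ≠ 0)
    (hp_axis : p 1 = 0) (hq_line : ∃ t : ℝ, q = t • v)
    (r₁ : ℝ) (hr₁ : r₁ = ‖p - q‖) (hr₁pos : 0 < r₁)
    (P Q : Matrix (Fin 2) (Fin 2) ℝ)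
    (hP : P = r₁ • !![v 0 / v 1, 1; 0, 0])
    (hQ : Q = P.transpose) :
    ∃ x : EuclideanSpace ℝ (Fin 2), ‖x‖ = 1 ∧ p = P.mulVec x ∧ q = Q.mulVec x :=
  stmt14_general v p q hvy hp_axis hq_line r₁ hr₁ hr₁pos P Q hP hQ
end

section
/- Let P ∈ ℝ^{n×d} of rank r, and suppose U ∈ ℝ^{n×r} and G ∈ ℝ^{r×d} satisfy P = UG and, for every z ∈ ℝ^r, ‖z‖_∞ ≤ ‖Uz‖₁. Let pᵢᵀ and uᵢᵀ denote the i-th rows of P and U respectively. Then for every x ∈ ℝ^d with Gx ≠ 0, |pᵢᵀx| / ‖Px‖₁ ≤ r·‖uᵢ‖₂. -/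
/-- Sensitivity bound: if `P = U * G` with `P` of rank `r` and
`‖z‖_∞ ≤ ‖U z‖₁` for every `z ∈ ℝ^r`, then for every `x` with `G x ≠ 0`,
`|pᵢᵀ x| / ‖P x‖₁ ≤ r * ‖uᵢ‖₂`, where `pᵢᵀ, uᵢᵀ` are the `i`-th rows of
`P` and `U`. -/
theorem stmt17 (n d r : ℕ)
    (P : Matrix (Fin n) (Fin d) ℝ)
    (U : Matrix (Fin n) (Fin r) ℝ)
    (G : Matrix (Fin r) (Fin d) ℝ)
    (hrank : P.rank = r)
    (hPUG : P = U * G)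
    (hU : ∀ z : Fin r → ℝ, ∀ j : Fin r, |z j| ≤ ∑ i, |U.mulVec z i|)
    (i : Fin n) (x : Fin d → ℝ) (hGx : G.mulVec x ≠ 0) :
    |P.mulVec x i| / (∑ i', |P.mulVec x i'|) ≤
      (r : ℝ) * Real.sqrt (∑ j, U i j ^ 2) := by
  set y := G.mulVec x with hy
  have hPx : P.mulVec x = U.mulVec y := by
    rw [hPUG, ← Matrix.mulVec_mulVec]
  set S := ∑ i', |P.mulVec x i'| with hS
  have hC : ∀ j, |U i j| ≤ Real.sqrt (∑ j, U i j ^ 2) := by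
    intro j
    rw [← Real.sqrt_sq_eq_abs]
    exact Real.sqrt_le_sqrt
      (Finset.single_le_sum (f := fun j => U i j ^ 2) (fun j _ => sq_nonneg _) (Finset.mem_univ j))
  have hSpos : 0 < S := by
    obtain ⟨j, hj⟩ := Function.ne_iff.mp hGx
    calc 0 < |y j| := abs_pos.mpr hj
    _ ≤ ∑ i, |U.mulVec y i| := hU y j
    _ = S := by rw [hS, hPx]
  rw [div_le_iff₀ hSpos]
  have h1 : |P.mulVec x i| ≤ Real.sqrt (∑ j, U i j ^ 2) * ∑ j, |y j| := by
    rw [hPx]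
    calc |U.mulVec y i| = |∑ j, U i j * y j| := rfl
    _ ≤ ∑ j, |U i j * y j| := Finset.abs_sum_le_sum_abs _ _
    _ ≤ ∑ j, Real.sqrt (∑ j, U i j ^ 2) * |y j| := by
        apply Finset.sum_le_sum; intro j _
        rw [abs_mul]
        exact mul_le_mul_of_nonneg_right (hC j) (abs_nonneg _)
    _ = _ := by rw [← Finset.mul_sum]
  have h2 : ∑ j, |y j| ≤ r * S := by
    calc ∑ j, |y j| ≤ ∑ _j : Fin r, S := by
          apply Finset.sum_le_sum; intro j _
          calc |y j| ≤ ∑ i, |U.mulVec y i| := hU y j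
          _ = S := by rw [hS, hPx]
    _ = r * S := by simp [Finset.sum_const, mul_comm]
  calc |P.mulVec x i| ≤ Real.sqrt (∑ j, U i j ^ 2) * ∑ j, |y j| := h1
  _ ≤ Real.sqrt (∑ j, U i j ^ 2) * (r * S) :=
      mul_le_mul_of_nonneg_left h2 (Real.sqrt_nonneg _)
  _ = r * Real.sqrt (∑ j, U i j ^ 2) * S := by ring
end

section
/- Let d ≥ 2, let R ∈ ℝ^{d×d}, t ∈ ℝ^d, p ∈ ℝ^d, ω ≥ 0, and let ℓ = {q ∈ ℝ^d : ‖Vq − b‖ = 0} for a matrix V ∈ ℝ^{(d−1)×d} with orthonormal rows and b ∈ ℝ^{d−1}. Then ω·dist(Rp − t, ℓ) = ‖(x(R,t)ᵀs₁, …, x(R,t)ᵀs_{d−1})‖₂, where x(R,t) ∈ ℝ^{d²+d+1} stacks the rows of R, −tᵀ, and −1, and s_k = ω·(V_{k,1}pᵀ | ⋯ | V_{k,d}pᵀ | V_{k*} | b_k)ᵀ. Consequently, (1/√d)·‖(x(R,t)ᵀs_k)_k‖₁ ≤ ω·dist(Rp−t, ℓ) ≤ ‖(x(R,t)ᵀs_k)_k‖₁.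 -/
/-!
Since `V` has orthonormal rows, `q ↦ V q` is a coisometry (`V Vᵀ = 1`), so the distance from `x`
to the line `{q | V q = b}` is `‖V x - b‖`, attained at `x - Vᵀ (V x - b)`. For `x = R p - t` the
`k`-th coordinate `(V (R p - t))_k - b_k` is bilinear in the pose `(R, t)` and the data
`(p, V, b)`; expanding it gives `x(R,t) ⬝ s_k = ω ((V (R p - t))_k - b_k)`. The two-sided
bound is the comparison of the `ℓ¹` and `ℓ²` norms on `ℝ^{d-1}` (Cauchy–Schwarz for the lower one).
-/

open Metric Matrix Finset
open scoped InnerProduct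

namespace ContinuousLinearMap

variable {𝕜 H K : Type*} [RCLike 𝕜]
  [NormedAddCommGroup H] [InnerProductSpace 𝕜 H] [CompleteSpace H]
  [NormedAddCommGroup K] [InnerProductSpace 𝕜 K] [CompleteSpace K]
  {L : H →L[𝕜] K}

theorem apply_adjoint_apply_of_comp_adjoint_eq_one (hL : L ∘L L† = 1) (y : K) :
    L ((L†) y) = y :=
  congrArg (· y) hL

theorem norm_adjoint_apply_of_comp_adjoint_eq_one (hL : L ∘L L† = 1) (y : K) :
    ‖(L†) y‖ = ‖y‖ :=
  (norm_map_iff_adjoint_comp_self (L†)).2 (by rwa [adjoint_adjoint]) y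

theorem norm_apply_le_of_comp_adjoint_eq_one (hL : L ∘L L† = 1) (x : H) : ‖L x‖ ≤ ‖x‖ := by
  have hadj : ‖L†‖ ≤ 1 :=
    opNorm_le_bound _ zero_le_one fun y => by
      rw [norm_adjoint_apply_of_comp_adjoint_eq_one hL, one_mul]
  calc ‖L x‖ ≤ ‖L‖ * ‖x‖ := L.le_opNorm x
    _ = ‖L†‖ * ‖x‖ := by rw [LinearIsometryEquiv.norm_map]
    _ ≤ ‖x‖ := mul_le_of_le_one_left (norm_nonneg x) hadj

/-- The nearest point of the fibre `L ⁻¹' {c}` to `x` is `x - (L†) (L x - c)`. -/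
theorem infDist_preimage_singleton_of_comp_adjoint_eq_one (hL : L ∘L L† = 1) (x : H) (c : K) :
    infDist x (L ⁻¹' {c}) = ‖L x - c‖ := by
  have hmem : x - (L†) (L x - c) ∈ L ⁻¹' {c} := by
    simp [apply_adjoint_apply_of_comp_adjoint_eq_one hL]
  refine le_antisymm ?_ ((le_infDist ⟨_, hmem⟩).2 fun q hq => ?_)
  · calc infDist x (L ⁻¹' {c}) ≤ dist x (x - (L†) (L x - c)) := infDist_le_dist_of_mem hmem
      _ = ‖L x - c‖ := by
        rw [dist_eq_norm, sub_sub_cancel, norm_adjoint_apply_of_comp_adjoint_eq_one hL]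
  · calc ‖L x - c‖ = ‖L (x - q)‖ := by rw [map_sub, Set.mem_preimage.1 hq]
      _ ≤ dist x q := (norm_apply_le_of_comp_adjoint_eq_one hL _).trans_eq (dist_eq_norm x q).symm

end ContinuousLinearMap

theorem Matrix.infDist_setOf_mulVec_eq {m n : Type*} [Fintype m] [DecidableEq m] [Fintype n]
    [DecidableEq n]
    {V : Matrix m n ℝ} (hV : V * Vᵀ = 1) (b : m → ℝ) (x : EuclideanSpace ℝ n) :
    infDist x {q : EuclideanSpace ℝ n | V *ᵥ q = b} = √(∑ k, ((V *ᵥ x) k - b k) ^ 2) := by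
  set L := (toEuclideanLin V).toContinuousLinearMap
  have hL : L ∘L L† = 1 := by
    ext1 y
    rw [← LinearMap.adjoint_toContinuousLinearMap, ← toEuclideanLin_conjTranspose_eq_adjoint]
    simp only [L, LinearMap.coe_toContinuousLinearMap', conjTranspose_eq_transpose_of_trivial,
      ContinuousLinearMap.comp_apply, one_apply_eq_self]
    rw [← LinearMap.comp_apply, ← toLpLin_mul_same, hV, toLpLin_one, LinearMap.id_apply]
  have hset : {q : EuclideanSpace ℝ n | V *ᵥ q = b} = L ⁻¹' {WithLp.toLp 2 b} := by
    ext q; simp [L, WithLp.ext_iff]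
  rw [hset, L.infDist_preimage_singleton_of_comp_adjoint_eq_one hL, EuclideanSpace.norm_eq]
  simp [L, sq_abs]

namespace Real

variable {ι : Type*} (s : Finset ι) (a : ι → ℝ)

theorem sqrt_sum_sq_le_sum_abs : √(∑ i ∈ s, a i ^ 2) ≤ ∑ i ∈ s, |a i| :=
  sqrt_le_iff.2 ⟨sum_nonneg fun i _ => abs_nonneg (a i), by
    simpa only [sq_abs] using sum_sq_le_sq_sum_of_nonneg fun i _ => abs_nonneg (a i)⟩

theorem sum_abs_le_sqrt_card_mul_sqrt_sum_sq :
    ∑ i ∈ s, |a i| ≤ √(#s : ℝ) * √(∑ i ∈ s, a i ^ 2) := by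
  rw [← sqrt_mul (Nat.cast_nonneg _)]
  refine le_sqrt_of_sq_le ?_
  simpa only [sq_abs] using sq_sum_le_card_mul_sum_sq (s := s) (f := fun i => |a i|)

theorem one_div_sqrt_mul_sum_abs_le_sqrt_sum_sq {m : ℕ} (hs : #s ≤ m) :
    1 / √(m : ℝ) * ∑ i ∈ s, |a i| ≤ √(∑ i ∈ s, a i ^ 2) := by
  rcases m.eq_zero_or_pos with rfl | hm
  · simp [sqrt_nonneg]
  rw [one_div, inv_mul_le_iff₀ (sqrt_pos.2 (Nat.cast_pos.2 hm))]
  calc ∑ i ∈ s, |a i| ≤ √(#s : ℝ) * √(∑ i ∈ s, a i ^ 2) :=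
        sum_abs_le_sqrt_card_mul_sqrt_sum_sq s a
    _ ≤ √(m : ℝ) * √(∑ i ∈ s, a i ^ 2) := by gcongr

end Real

section PointToLine

variable {α m n κ : Type*} [CommRing α] [Fintype m] [Fintype n]

-- `x(R,t)` and `s_k / ω` of the paper, indexed by `(m × n) ⊕ (m ⊕ Unit)` in place of `ℝ^{d²+d+1}`.

def poseVec (R : Matrix m n α) (t : m → α) : (m × n) ⊕ (m ⊕ Unit) → α :=
  Sum.elim (fun ij => R ij.1 ij.2) (Sum.elim (fun j => -t j) (fun _ => -1))

def sampleVec (V : Matrix κ m α) (p : n → α) (b : κ → α) (k : κ) :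
    (m × n) ⊕ (m ⊕ Unit) → α :=
  Sum.elim (fun ij => V k ij.1 * p ij.2) (Sum.elim (fun j => V k j) (fun _ => b k))

theorem poseVec_dotProduct_sampleVec (R : Matrix m n α) (t : m → α) (V : Matrix κ m α)
    (p : n → α) (b : κ → α) (k : κ) :
    poseVec R t ⬝ᵥ sampleVec V p b k = (V *ᵥ (R *ᵥ p - t)) k - b k := by
  simp only [dotProduct, poseVec, sampleVec, Fintype.sum_sum_type, Fintype.sum_prod_type,
    Sum.elim_inl, Sum.elim_inr, mulVec, Pi.sub_apply, mul_sub, sum_sub_distrib, mul_sum]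
  have hR : ∀ i j, R i j * (V k i * p j) = V k i * (R i j * p j) := fun _ _ => by ring
  have ht : ∀ j, -t j * V k j = -(V k j * t j) := fun _ => by ring
  simp only [hR, ht, sum_neg_distrib, univ_unique, sum_singleton]
  ring

end PointToLine

theorem stmt19_general (d : ℕ)
    (R : Matrix (Fin d) (Fin d) ℝ) (t p : EuclideanSpace ℝ (Fin d))
    (ω : ℝ) (hω : 0 ≤ ω)
    (V : Matrix (Fin (d - 1)) (Fin d) ℝ)
    (hV : V * V.transpose = 1)
    (b : Fin (d - 1) → ℝ)
    (ℓ : Set (EuclideanSpace ℝ (Fin d)))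
    (hℓ : ℓ = {q : EuclideanSpace ℝ (Fin d) | V.mulVec q = b})
    -- the stacked vector x(R,t) ∈ ℝ^{d²+d+1}
    (xvec : (Fin d × Fin d) ⊕ (Fin d ⊕ Unit) → ℝ)
    (hxvec : xvec = Sum.elim (fun ij => R ij.1 ij.2)
      (Sum.elim (fun j => -t j) (fun _ => -1)))
    -- the vectors s_k ∈ ℝ^{d²+d+1}
    (s : Fin (d - 1) → (Fin d × Fin d) ⊕ (Fin d ⊕ Unit) → ℝ)
    (hs : ∀ k, s k = fun idx => ω * Sum.elim (fun ij => V k ij.1 * p ij.2)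
      (Sum.elim (fun j => V k j) (fun _ => b k)) idx)
    -- the aligned point R p − t
    (Rpt : EuclideanSpace ℝ (Fin d))
    (hRpt : ∀ i, Rpt i = R.mulVec p i - t i) :
    ω * Metric.infDist Rpt ℓ =
      Real.sqrt (∑ k, (∑ idx, xvec idx * s k idx) ^ 2) ∧
    (1 / Real.sqrt d) * ∑ k, |∑ idx, xvec idx * s k idx| ≤ ω * Metric.infDist Rpt ℓ ∧
    ω * Metric.infDist Rpt ℓ ≤ ∑ k, |∑ idx, xvec idx * s k idx| := by
  have hdot : ∀ k, ∑ idx, xvec idx * s k idx = ω * ((V *ᵥ Rpt) k - b k) := by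
    intro k
    have hRpt_eq : Rpt.ofLp = R *ᵥ p - t := funext hRpt
    rw [hxvec, hs, hRpt_eq, ← poseVec_dotProduct_sampleVec]
    simp only [dotProduct, mul_left_comm _ ω, ← mul_sum]
    rfl
  have key : ω * infDist Rpt ℓ = √(∑ k, (∑ idx, xvec idx * s k idx) ^ 2) := by
    simp only [hℓ, infDist_setOf_mulVec_eq hV, hdot, mul_pow, ← mul_sum,
      Real.sqrt_mul (sq_nonneg ω), Real.sqrt_sq hω]
  refine ⟨key, ?_, ?_⟩ <;> rw [key]
  · simpa using Real.one_div_sqrt_mul_sum_abs_le_sqrt_sum_sq univ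
      (fun k => ∑ idx, xvec idx * s k idx) (by simp : #(univ : Finset (Fin (d - 1))) ≤ d)
  · exact Real.sqrt_sum_sq_le_sum_abs _ _

/-- Linearization of the point-to-line distance used in the coreset
construction. With `ℓ = {q : ‖V q − b‖ = 0}` for `V` with orthonormal rows,
`x(R,t)` stacking the rows of `R`, `−t` and `−1`, and
`s_k = ω (V_{k,1} pᵀ | ⋯ | V_{k,d} pᵀ | V_{k*} | b_k)ᵀ`, we have
`ω dist(Rp − t, ℓ) = ‖(x(R,t)ᵀ s₁, …, x(R,t)ᵀ s_{d−1})‖₂`, and consequently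
`(1/√d) ‖(x(R,t)ᵀ s_k)_k‖₁ ≤ ω dist(Rp − t, ℓ) ≤ ‖(x(R,t)ᵀ s_k)_k‖₁`. -/
theorem stmt19 (d : ℕ) (hd : 2 ≤ d)
    (R : Matrix (Fin d) (Fin d) ℝ) (t p : EuclideanSpace ℝ (Fin d))
    (ω : ℝ) (hω : 0 ≤ ω)
    (V : Matrix (Fin (d - 1)) (Fin d) ℝ)
    (hV : V * V.transpose = 1)
    (b : Fin (d - 1) → ℝ)
    (ℓ : Set (EuclideanSpace ℝ (Fin d)))
    (hℓ : ℓ = {q : EuclideanSpace ℝ (Fin d) | V.mulVec q = b})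
    -- the stacked vector x(R,t) ∈ ℝ^{d²+d+1}
    (xvec : (Fin d × Fin d) ⊕ (Fin d ⊕ Unit) → ℝ)
    (hxvec : xvec = Sum.elim (fun ij => R ij.1 ij.2)
      (Sum.elim (fun j => -t j) (fun _ => -1)))
    -- the vectors s_k ∈ ℝ^{d²+d+1}
    (s : Fin (d - 1) → (Fin d × Fin d) ⊕ (Fin d ⊕ Unit) → ℝ)
    (hs : ∀ k, s k = fun idx => ω * Sum.elim (fun ij => V k ij.1 * p ij.2)
      (Sum.elim (fun j => V k j) (fun _ => b k)) idx)
    -- the aligned point R p − t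
    (Rpt : EuclideanSpace ℝ (Fin d))
    (hRpt : ∀ i, Rpt i = R.mulVec p i - t i) :
    ω * Metric.infDist Rpt ℓ =
      Real.sqrt (∑ k, (∑ idx, xvec idx * s k idx) ^ 2) ∧
    (1 / Real.sqrt d) * ∑ k, |∑ idx, xvec idx * s k idx| ≤ ω * Metric.infDist Rpt ℓ ∧
    ω * Metric.infDist Rpt ℓ ≤ ∑ k, |∑ idx, xvec idx * s k idx| :=
  stmt19_general d R t p ω hω V hV b ℓ hℓ xvec hxvec s hs Rpt hRpt
end
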